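/- Let f : ℝ → ℝ be smooth, c ∈ ℝ, and define on the region { (u,v,w) ∈ ℝ³ : v ≠ 0 } the skew-symmetric matrix ω^{13} = c·f(w), ω^{23} = (1 − c·u) f(w) / v, ω^{12} = 0. Then ω satisfies the Jacobi identity ∑_s ( ω^{is} ∂_s ω^{jk} + ω^{js} ∂_s ω^{ki} + ω^{ks} ∂_s ω^{ij} ) = 0 for all i, j, k ∈ {1,2,3}. -/

import Mathlib

/-- Partial derivative of `F` in the direction of the `s`-th coordinate of `ℝ³`. -/
noncomputable def pd3 (s : Fin 3) (F : (Fin 3 → ℝ) → ℝ) (x : Fin 3 → ℝ) : ℝ :=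
  fderiv ℝ F x (Pi.single s 1)

lemma pd3_neg (s : Fin 3) (G : (Fin 3 → ℝ) → ℝ) (x : Fin 3 → ℝ) :
    pd3 s (fun y => -(G y)) x = - pd3 s G x := by
  simp [pd3, fderiv_neg]

lemma pd3_zero (s : Fin 3) (x : Fin 3 → ℝ) :
    pd3 s (fun _ => (0:ℝ)) x = 0 := by
  simp [pd3]

/-- The ultralocal part of the operator `C_{3,7}`: `ω^{12} = 0`, `ω^{13} = c·f(w)`,
`ω^{23} = (1 − c·u)·f(w)/v`, extended by skew-symmetry, satisfies the Jacobi identity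
on the region `v ≠ 0`. -/
theorem stmt14 (f : ℝ → ℝ) (hf : ContDiff ℝ (⊤ : ℕ∞) f) (c : ℝ) :
    ∀ x : Fin 3 → ℝ, x 1 ≠ 0 → ∀ i j k : Fin 3,
      (fun (ω : (Fin 3 → ℝ) → Matrix (Fin 3) (Fin 3) ℝ) =>
        ∑ s : Fin 3,
          (ω x i s * pd3 s (fun y => ω y j k) x
            + ω x j s * pd3 s (fun y => ω y k i) x
            + ω x k s * pd3 s (fun y => ω y i j) x))
      (fun y => !![0, 0, c * f (y 2);
                   0, 0, (1 - c * y 0) * f (y 2) / y 1;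
                   -(c * f (y 2)), -((1 - c * y 0) * f (y 2) / y 1), 0]) = 0 := by
  intro x hx i j k
  have hf' : HasDerivAt f (deriv f (x 2)) (x 2) :=
    ((hf.differentiable (by simp)) (x 2)).hasDerivAt
  have h2 : HasFDerivAt (fun y : Fin 3 → ℝ => f (y 2))
      ((deriv f (x 2)) • (ContinuousLinearMap.proj 2 : (Fin 3 → ℝ) →L[ℝ] ℝ)) x :=
    by exact hf'.comp_hasFDerivAt x (hasFDerivAt_apply 2 x)
  have hA : ∀ s : Fin 3, pd3 s (fun y => c * f (y 2)) x
      = c * deriv f (x 2) * (Pi.single s 1 : Fin 3 → ℝ) 2 := by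
    intro s
    have h : HasFDerivAt (fun y : Fin 3 → ℝ => c * f (y 2))
        (c • ((deriv f (x 2)) • (ContinuousLinearMap.proj 2 : (Fin 3 → ℝ) →L[ℝ] ℝ))) x :=
      h2.const_mul c
    rw [pd3, h.fderiv]
    simp [mul_assoc]
  have hB : ∀ s : Fin 3, pd3 s (fun y => (1 - c * y 0) * f (y 2) / y 1) x =
      (-c * f (x 2) / x 1) * (Pi.single s 1 : Fin 3 → ℝ) 0
      + (-((1 - c * x 0) * f (x 2)) / (x 1)^2) * (Pi.single s 1 : Fin 3 → ℝ) 1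
      + ((1 - c * x 0) * deriv f (x 2) / x 1) * (Pi.single s 1 : Fin 3 → ℝ) 2 := by
    intro s
    have h0 : HasFDerivAt (fun y : Fin 3 → ℝ => 1 - c * y 0)
        (-(c • (ContinuousLinearMap.proj 0 : (Fin 3 → ℝ) →L[ℝ] ℝ))) x :=
      ((hasFDerivAt_apply 0 x).const_mul c).const_sub 1
    have h1inv : HasFDerivAt (fun y : Fin 3 → ℝ => (y 1)⁻¹)
        ((-(x 1 ^ 2)⁻¹) • (ContinuousLinearMap.proj 1 : (Fin 3 → ℝ) →L[ℝ] ℝ)) x :=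
      by exact (hasDerivAt_inv hx).comp_hasFDerivAt x (hasFDerivAt_apply 1 x)
    have h : HasFDerivAt (fun y : Fin 3 → ℝ => (1 - c * y 0) * f (y 2) * (y 1)⁻¹) _ x :=
      (h0.mul h2).mul h1inv
    rw [show (fun y : Fin 3 → ℝ => (1 - c * y 0) * f (y 2) / y 1)
        = fun y : Fin 3 → ℝ => (1 - c * y 0) * f (y 2) * (y 1)⁻¹
        from funext fun y => div_eq_mul_inv _ _]
    rw [pd3, h.fderiv]
    simp only [ContinuousLinearMap.coe_smul', ContinuousLinearMap.add_apply,
      ContinuousLinearMap.smul_apply, ContinuousLinearMap.sub_apply,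
      ContinuousLinearMap.neg_apply, ContinuousLinearMap.proj_apply, Pi.smul_apply, Pi.mul_apply,
      smul_eq_mul]
    field_simp
    ring
  fin_cases i <;> fin_cases j <;> fin_cases k <;>
    simp [Fin.sum_univ_three, pd3_neg, pd3_zero, hA, hB, Pi.single_apply] <;>
    field_simp <;>
    ring
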